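/- Let σ be a permutation of length m with exactly one descent and exactly i adjacency pairs. Then the letter m lies on the same side of the descent as the letter 1 if and only if m − i is odd. -/

import Mathlib

/-- Two lists of naturals are order-isomorphic: same length and same relative order. -/
def OrdIso (a b : List ℕ) : Prop :=
  a.length = b.length ∧
    ∀ i, i < a.length → ∀ j, j < a.length →
      (a.getD i 0 < a.getD j 0 ↔ b.getD i 0 < b.getD j 0)

instance (a b : List ℕ) : Decidable (OrdIso a b) := by unfold OrdIso; infer_instance

/-- `σ` occurs as a pattern in `π`: some subsequence of `π` is order-isomorphic to `σ`. -/
def occursIn (σ π : List ℕ) : Prop := ∃ s ∈ π.sublists, OrdIso σ s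

instance (σ π : List ℕ) : Decidable (occursIn σ π) := by unfold occursIn; infer_instance

/-- `l` is a permutation of `1, …, l.length`. -/
def IsPermList (l : List ℕ) : Prop := l.Perm ((List.range l.length).map (· + 1))

/-- The number of descents of `l` (positions `i` with `l i > l (i+1)`, 0-based). -/
def des (l : List ℕ) : ℕ :=
  ((List.range (l.length - 1)).filter (fun i => decide (l.getD (i+1) 0 < l.getD i 0))).length

/-- `d_π(c)`: one plus the number of descents of `π` preceding the letter `c`. -/
def dval (l : List ℕ) (c : ℕ) : ℕ :=
  1 + ((List.range (l.idxOf c)).filter (fun i => decide (l.getD (i+1) 0 < l.getD i 0))).length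

/-- The word `f(π) = d_π(1) d_π(2) ⋯ d_π(n)`. -/
def fword (l : List ℕ) : List ℕ := (List.range l.length).map (fun i => dval l (i+1))

/-- The largest letter of the word `w`. -/
def maxLetter (w : List ℕ) : ℕ := w.foldr max 0

/-- `p_w(j)`: positions (1-based, increasing) of the letter `j` in `w`. -/
def posList (w : List ℕ) (j : ℕ) : List ℕ :=
  ((List.range w.length).filter (fun i => decide (w.getD i 0 = j))).map (· + 1)

/-- `g(w)`: the concatenation of the position lists `p_w(1), …, p_w(max w)`. -/
def gperm (w : List ℕ) : List ℕ := (List.range (maxLetter w)).flatMap (fun j => posList w (j+1))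

/-- Membership in the poset 𝒜̂: positive letters, every letter in `{1,…,max w}` occurs,
and the rightmost occurrence of each `i < max w` is preceded by an occurrence of `i+1`. -/
def InAhat (w : List ℕ) : Prop :=
  (∀ x ∈ w, 1 ≤ x) ∧
  (∀ i, i < maxLetter w → i + 1 ∈ w) ∧
  (∀ i, i < maxLetter w - 1 → ∃ t, t < w.length ∧ w.getD t 0 = i + 1 ∧
     (∀ s, s < w.length → t < s → w.getD s 0 ≠ i + 1) ∧ ∃ u, u < t ∧ w.getD u 0 = i + 2)

instance (w : List ℕ) : Decidable (InAhat w) := by unfold InAhat; infer_instance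

/-- All permutations (as lists on `1..k`) of every length `k ≤ n`. -/
def permsUpTo (n : ℕ) : List (List ℕ) :=
  (List.range (n+1)).flatMap (fun k => ((List.range k).map (· + 1)).permutations)

/-- The interval `[a,b]` in the pattern containment poset, as a list. -/
def intervalList (a b : List ℕ) : List (List ℕ) :=
  (permsUpTo b.length).filter (fun z => decide (occursIn a z ∧ occursIn z b))

/-- `μ` is the Möbius function of the poset of permutations under pattern containment:
`μ(a,a) = 1` and, for `a < b`, `∑_{a ≤ z ≤ b} μ(a,z) = 0`. -/
def MoebiusOn (μ : List ℕ → List ℕ → ℤ) : Prop :=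
  (∀ a, μ a a = 1) ∧
  ∀ a b, IsPermList a → IsPermList b → occursIn a b → a ≠ b →
    ((intervalList a b).map (μ a)).sum = 0

/-- All lists of length `n` with entries in `{0, …, k-1}`. -/
def listsOf (n k : ℕ) : List (List ℕ) :=
  (List.range n).foldr (fun _ acc => (List.range k).flatMap (fun a => acc.map (a :: ·))) [[]]

/-- The letters of `π` in the nonzero positions of `η`. -/
def embOcc (η π : List ℕ) : List ℕ :=
  ((List.range π.length).filter (fun i => decide (η.getD i 0 ≠ 0))).map (fun i => π.getD i 0)

/-- `η` is an embedding of `σ` in `π`: a sequence of length `|π|` whose nonzero positions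
are the positions of an occurrence of `σ` in `π` and whose nonzero letters spell `σ`. -/
def IsEmbedding (η σ π : List ℕ) : Prop :=
  η.length = π.length ∧ η.filter (fun x => decide (x ≠ 0)) = σ ∧ OrdIso σ (embOcc η π)

/-- `η` is a normal embedding: nonzero at every letter of `π` lying in the tail of an
adjacency (i.e. every position whose predecessor holds the previous value). -/
def IsNormalEmbedding (η σ π : List ℕ) : Prop :=
  IsEmbedding η σ π ∧
    ∀ i, i < π.length → 0 < i → π.getD i 0 = π.getD (i-1) 0 + 1 → η.getD i 0 ≠ 0

instance (η σ π : List ℕ) : Decidable (IsNormalEmbedding η σ π) := by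
  unfold IsNormalEmbedding IsEmbedding; infer_instance

/-- The number of normal embeddings of `σ` in `π`. -/
def normalCount (σ π : List ℕ) : ℕ :=
  ((listsOf π.length (σ.length + 1)).filter (fun η => decide (IsNormalEmbedding η σ π))).length

/-- The total number of letters in all tails of all adjacencies of `π`;
equivalently, the number of adjacency pairs of `π`. -/
def tailCount (π : List ℕ) : ℕ :=
  ((List.range π.length).filter (fun i => decide (0 < i ∧ π.getD i 0 = π.getD (i-1) 0 + 1))).length

/-- The number of occurrences of `σ` as a pattern in `π`. -/
def occCount (σ π : List ℕ) : ℕ :=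
  ((List.range π.length).sublists.filter
    (fun s => decide (OrdIso σ (s.map (fun i => π.getD i 0))))).length

/-- All words of length `n` on the alphabet `{1, …, k}`. -/
def wordsOf (n k : ℕ) : List (List ℕ) := (listsOf n k).map (List.map (· + 1))

/-- All permutations of `1, …, n`, as lists. -/
def permsOfLen (n : ℕ) : List (List ℕ) := ((List.range n).map (· + 1)).permutations

/-!
A permutation with a single descent at `d` increases on positions `≤ d` and on positions `> d`.
Hence the letters `c` and `c + 1` are adjacent exactly when they lie on the same side of the
descent: if they were on the same side but not adjacent, some letter strictly between them would
sit between them. So among the `m - 1` steps `c ↦ c + 1` of the values, `i` keep the side and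
`m - 1 - i` switch it, and `1` and `m` lie on the same side iff the number of switches is even.
-/

open Finset

lemma List.length_filter_range (p : ℕ → Prop) [DecidablePred p] (n : ℕ) :
    ((List.range n).filter (fun a => decide (p a))).length = #{a ∈ Finset.range n | p a} := by
  simp [Finset.filter, Finset.card, Multiset.range]

lemma List.getD_idxOf {α : Type*} [BEq α] [LawfulBEq α] {l : List α} {a : α} (d : α)
    (ha : a ∈ l) : l.getD (l.idxOf a) d = a := by
  rw [getD_eq_getElem _ _ (idxOf_lt_length_iff.2 ha), getElem_idxOf]

lemma List.Nodup.idxOf_getD {α : Type*} [BEq α] [LawfulBEq α] {l : List α} (hl : l.Nodup)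
    (d : α) {j : ℕ} (hj : j < l.length) : l.idxOf (l.getD j d) = j := by
  rw [getD_eq_getElem _ _ hj, hl.idxOf_getElem]

lemma List.getD_mem {α : Type*} {l : List α} (d : α) {j : ℕ} (hj : j < l.length) :
    l.getD j d ∈ l := by
  rw [getD_eq_getElem _ _ hj]
  exact getElem_mem hj

lemma even_card_filter_not_iff_iff (p : ℕ → Prop) [DecidablePred p] (n : ℕ) :
    Even #{t ∈ range n | ¬(p t ↔ p (t + 1))} ↔ (p 0 ↔ p n) := by
  induction n with
  | zero => simp
  | succ n ih =>
    rw [range_add_one, filter_insert]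
    split_ifs with h
    · rw [ih]
      tauto
    · rw [card_insert_of_notMem (by simp), Nat.even_add_one, ih]
      tauto

namespace IsPermList

variable {σ : List ℕ}

lemma nodup (hσ : IsPermList σ) : σ.Nodup :=
  hσ.nodup_iff.2 (List.nodup_range.map fun _ _ h => by simpa using h)

lemma mem_iff (hσ : IsPermList σ) {c : ℕ} : c ∈ σ ↔ 1 ≤ c ∧ c ≤ σ.length := by
  rw [List.Perm.mem_iff hσ, List.mem_map]
  simp only [List.mem_range]
  constructor
  · rintro ⟨a, ha, rfl⟩
    omega
  · rintro ⟨h1, h2⟩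
    exact ⟨c - 1, by omega, by omega⟩

lemma tailCount_eq (hσ : IsPermList σ) :
    tailCount σ = #{t ∈ range (σ.length - 1) | σ.idxOf (t + 2) = σ.idxOf (t + 1) + 1} := by
  have hmem : ∀ {j}, j < σ.length → 1 ≤ σ.getD j 0 ∧ σ.getD j 0 ≤ σ.length := fun hj =>
    hσ.mem_iff.1 (σ.getD_mem 0 hj)
  unfold tailCount
  rw [List.length_filter_range]
  apply card_nbij' (fun j => σ.getD j 0 - 2) (fun t => σ.idxOf (t + 2))
  · intro j hj
    simp only [coe_filter, mem_range, Set.mem_ofPred_eq] at hj ⊢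
    obtain ⟨hj, hj0, hadj⟩ := hj
    have := hmem hj
    have := hmem (j := j - 1) (by omega)
    refine ⟨by omega, ?_⟩
    rw [show σ.getD j 0 - 2 + 2 = σ.getD j 0 by omega,
      show σ.getD j 0 - 2 + 1 = σ.getD (j - 1) 0 by omega, hσ.nodup.idxOf_getD 0 hj,
      hσ.nodup.idxOf_getD 0 (by omega)]
    omega
  · intro t ht
    simp only [coe_filter, mem_range, Set.mem_ofPred_eq] at ht ⊢
    obtain ⟨ht, hadj⟩ := ht
    have h1 : t + 1 ∈ σ := hσ.mem_iff.2 ⟨by omega, by omega⟩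
    have h2 : t + 2 ∈ σ := hσ.mem_iff.2 ⟨by omega, by omega⟩
    refine ⟨List.idxOf_lt_length_iff.2 h2, by omega, ?_⟩
    rw [σ.getD_idxOf 0 h2, show σ.idxOf (t + 2) - 1 = σ.idxOf (t + 1) by omega,
      σ.getD_idxOf 0 h1]
  · intro j hj
    simp only [coe_filter, mem_range, Set.mem_ofPred_eq] at hj
    have := hmem (j := j - 1) (by omega)
    dsimp only
    rw [show σ.getD j 0 - 2 + 2 = σ.getD j 0 by omega, hσ.nodup.idxOf_getD 0 hj.1]
  · intro t ht
    simp only [coe_filter, mem_range, Set.mem_ofPred_eq] at ht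
    dsimp only
    rw [σ.getD_idxOf 0 (hσ.mem_iff.2 ⟨by omega, by omega⟩)]
    omega

end IsPermList

def HasUniqueDescentAt (l : List ℕ) (d : ℕ) : Prop :=
  des l = 1 ∧ d + 1 < l.length ∧ l.getD (d + 1) 0 < l.getD d 0

namespace HasUniqueDescentAt

variable {l : List ℕ} {d : ℕ}

lemma getD_lt_getD_add_one (h : HasUniqueDescentAt l d) (hl : l.Nodup) {j : ℕ}
    (hj : j + 1 < l.length) (hjd : j ≠ d) : l.getD j 0 < l.getD (j + 1) 0 := by
  obtain ⟨hdes, hd1, hd2⟩ := h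
  obtain ⟨a, ha⟩ := List.length_eq_one_iff.1 hdes
  have hdescent : ∀ k, k + 1 < l.length → l.getD (k + 1) 0 < l.getD k 0 → k = a := by
    intro k hk hlt
    have hk : k ∈ (List.range (l.length - 1)).filter
        (fun i => decide (l.getD (i + 1) 0 < l.getD i 0)) :=
      List.mem_filter.2 ⟨List.mem_range.2 (by omega), decide_eq_true hlt⟩
    rwa [ha, List.mem_singleton] at hk
  have hne : l.getD j 0 ≠ l.getD (j + 1) 0 := fun heq => by
    have := congrArg l.idxOf heq
    rw [hl.idxOf_getD 0 (by omega), hl.idxOf_getD 0 hj] at this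
    omega
  refine (lt_or_gt_of_ne hne).resolve_right fun hlt => hjd ?_
  rw [hdescent j hj hlt, hdescent d hd1 hd2]

lemma getD_lt_getD_of_sameSide (h : HasUniqueDescentAt l d) (hl : l.Nodup) {p q : ℕ}
    (hpq : p < q) (hq : q < l.length) (hside : p ≤ d ↔ q ≤ d) : l.getD p 0 < l.getD q 0 := by
  have hmono : ∀ s : Set ℕ, s.OrdConnected → (∀ a ∈ s, a + 1 ∈ s → a + 1 < l.length ∧ a ≠ d) →
      StrictMonoOn (fun j => l.getD j 0) s := fun s hs hstep =>
    strictMonoOn_of_lt_succ hs fun a _ ha ha1 => by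
      rw [Nat.succ_eq_succ] at ha1 ⊢
      exact h.getD_lt_getD_add_one hl (hstep a ha ha1).1 (hstep a ha ha1).2
  by_cases hqd : q ≤ d
  · refine hmono (Set.Iic d) Set.ordConnected_Iic (fun a _ ha1 => ?_) (Set.mem_Iic.2 (by omega))
      (Set.mem_Iic.2 hqd) hpq
    have := h.2.1
    simp only [Set.mem_Iic] at ha1
    omega
  · refine hmono (Set.Ico (d + 1) l.length) Set.ordConnected_Ico (fun a ha ha1 => ?_)
      (Set.mem_Ico.2 ⟨by omega, by omega⟩) (Set.mem_Ico.2 ⟨by omega, hq⟩) hpq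
    simp only [Set.mem_Ico] at ha ha1
    omega

lemma idxOf_add_one_eq_iff (h : HasUniqueDescentAt l d) (hl : l.Nodup) {c : ℕ} (hc : c ∈ l)
    (hc1 : c + 1 ∈ l) :
    l.idxOf (c + 1) = l.idxOf c + 1 ↔ (l.idxOf c ≤ d ↔ l.idxOf (c + 1) ≤ d) := by
  have hp : l.getD (l.idxOf c) 0 = c := l.getD_idxOf 0 hc
  have hq : l.getD (l.idxOf (c + 1)) 0 = c + 1 := l.getD_idxOf 0 hc1
  have hpl : l.idxOf c < l.length := List.idxOf_lt_length_iff.2 hc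
  have hql : l.idxOf (c + 1) < l.length := List.idxOf_lt_length_iff.2 hc1
  constructor
  · intro hadj
    have hpd : l.idxOf c ≠ d := by
      intro hpd
      have := h.2.2
      rw [← hpd, ← hadj, hp, hq] at this
      omega
    omega
  · intro hside
    rcases lt_trichotomy (l.idxOf c) (l.idxOf (c + 1)) with hlt | heq | hgt
    · by_contra hgap
      have h1 := h.getD_lt_getD_of_sameSide hl (p := l.idxOf c) (q := l.idxOf c + 1)
        (by omega) (by omega) (by omega)
      have h2 := h.getD_lt_getD_of_sameSide hl (p := l.idxOf c + 1) (q := l.idxOf (c + 1))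
        (by omega) hql (by omega)
      rw [hp] at h1
      rw [hq] at h2
      omega
    · rw [heq, hq] at hp
      omega
    · have := h.getD_lt_getD_of_sameSide hl hgt hpl hside.symm
      rw [hp, hq] at this
      omega

end HasUniqueDescentAt

/-- for `σ` of length `m` with exactly one descent (at position `d`, 0-based)
and `i` adjacency pairs: `m` lies on the same side of the descent as `1` iff `m - i` is odd. -/
theorem largest_same_side_iff (σ : List ℕ) (m i : ℕ) (hσ : IsPermList σ)
    (hm : σ.length = m) (hd : des σ = 1) (hi : tailCount σ = i)
    (d : ℕ) (hd1 : d + 1 < m) (hd2 : σ.getD (d+1) 0 < σ.getD d 0) :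
    ((σ.idxOf 1 ≤ d ↔ σ.idxOf m ≤ d)) ↔ Odd (m - i) := by
  subst hm hi
  have hdesc : HasUniqueDescentAt σ d := ⟨hd, hd1, hd2⟩
  have hsame : tailCount σ =
      #{t ∈ range (σ.length - 1) | σ.idxOf (t + 1) ≤ d ↔ σ.idxOf (t + 2) ≤ d} := by
    rw [hσ.tailCount_eq]
    refine congrArg card (filter_congr fun t ht => ?_)
    rw [mem_range] at ht
    exact hdesc.idxOf_add_one_eq_iff hσ.nodup (hσ.mem_iff.2 ⟨by omega, by omega⟩)
      (hσ.mem_iff.2 ⟨by omega, by omega⟩)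
  have hsplit := card_filter_add_card_filter_not (s := range (σ.length - 1))
    fun t => σ.idxOf (t + 1) ≤ d ↔ σ.idxOf (t + 2) ≤ d
  have hswitch : Even #{t ∈ range (σ.length - 1) | ¬(σ.idxOf (t + 1) ≤ d ↔ σ.idxOf (t + 2) ≤ d)}
      ↔ (σ.idxOf 1 ≤ d ↔ σ.idxOf σ.length ≤ d) := by
    have := even_card_filter_not_iff_iff (fun t => σ.idxOf (t + 1) ≤ d) (σ.length - 1)
    rwa [Nat.sub_add_cancel (by omega)] at this
  rw [card_range] at hsplit
  rw [← hswitch, Nat.odd_iff, Nat.even_iff]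
  omega
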